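/- Let π be a coupling of probability measures μ and ν on ℝ such that |x - x'| ≤ Δ for π-almost every (x, x'). Let p_θ be the Laplace density with scale θ > 0 and ε > 0. Then for every y ∈ ℝ: ∫ p_θ(y - x) dπ(x,x') - e^ε ∫ p_θ(y - x') dπ(x,x') ≤ (e^{Δ/θ} - e^ε) · ∫ p_θ(y - x') dπ(x,x'). -/

import Mathlib

/-!
By the reverse triangle inequality `p_θ(y - x) ≤ e^{|x - x'|/θ} p_θ(y - x')`. Integrating against
`π`, where `|x - x'| ≤ Δ`, gives `∫ p_θ(y - x) dπ ≤ e^{Δ/θ} ∫ p_θ(y - x') dπ`, and the claim is this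
bound with `e^ε ∫ p_θ(y - x') dπ` subtracted from both sides.
-/

open MeasureTheory

/-- The Laplace density with scale parameter `θ`. -/
noncomputable def lap (θ z : ℝ) : ℝ := (1 / (2 * θ)) * Real.exp (-|z| / θ)

section Laplace

variable {θ : ℝ}

lemma lap_nonneg (hθ : 0 ≤ θ) (z : ℝ) : 0 ≤ lap θ z := by
  unfold lap; positivity

lemma lap_le (hθ : 0 ≤ θ) (z : ℝ) : lap θ z ≤ 1 / (2 * θ) := by
  unfold lap
  refine mul_le_of_le_one_right (by positivity) (Real.exp_le_one_iff.mpr ?_)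
  exact div_nonpos_of_nonpos_of_nonneg (neg_nonpos.mpr (abs_nonneg z)) hθ

lemma continuous_lap (θ : ℝ) : Continuous (lap θ) := by
  unfold lap; fun_prop

lemma lap_le_exp_mul_lap (hθ : 0 ≤ θ) (a b : ℝ) :
    lap θ a ≤ Real.exp (|a - b| / θ) * lap θ b := by
  unfold lap
  rw [mul_left_comm, ← Real.exp_add, ← add_div]
  gcongr
  linarith [abs_sub_abs_le_abs_sub b a, abs_sub_comm a b]

lemma lap_sub_le_exp_mul_lap_sub (hθ : 0 ≤ θ) {Δ x x' : ℝ} (h : |x - x'| ≤ Δ) (y : ℝ) :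
    lap θ (y - x) ≤ Real.exp (Δ / θ) * lap θ (y - x') := by
  refine (lap_le_exp_mul_lap hθ _ (y - x')).trans ?_
  gcongr
  · exact lap_nonneg hθ _
  · rwa [sub_sub_sub_cancel_left, abs_sub_comm]

lemma integrable_lap_comp {α : Type*} [MeasurableSpace α] {μ : Measure α} [IsFiniteMeasure μ]
    (hθ : 0 ≤ θ) {f : α → ℝ} (hf : Measurable f) : Integrable (fun a ↦ lap θ (f a)) μ :=
  .of_bound ((continuous_lap θ).measurable.comp hf).aestronglyMeasurable (1 / (2 * θ))
    (ae_of_all _ fun a ↦ by rw [Real.norm_of_nonneg (lap_nonneg hθ _)]; exact lap_le hθ _)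

lemma integral_lap_sub_fst_le {π : Measure (ℝ × ℝ)} [IsFiniteMeasure π] (hθ : 0 ≤ θ) {Δ : ℝ}
    (hsupp : ∀ᵐ z ∂π, |z.1 - z.2| ≤ Δ) (y : ℝ) :
    ∫ z, lap θ (y - z.1) ∂π ≤ Real.exp (Δ / θ) * ∫ z, lap θ (y - z.2) ∂π := by
  rw [← integral_const_mul]
  refine integral_mono_of_nonneg (ae_of_all _ fun _ ↦ lap_nonneg hθ _)
    ((integrable_lap_comp hθ (by fun_prop)).const_mul _) ?_
  filter_upwards [hsupp] with z hz using lap_sub_le_exp_mul_lap_sub hθ hz y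

end Laplace

theorem laplace_coupling_master_bound_general (π : Measure (ℝ × ℝ)) [IsProbabilityMeasure π]
    (Δ ε θ : ℝ) (hθ : 0 < θ)
    (hsupp : ∀ᵐ z ∂π, |z.1 - z.2| ≤ Δ) (y : ℝ) :
    (∫ z, lap θ (y - z.1) ∂π) - Real.exp ε * ∫ z, lap θ (y - z.2) ∂π
      ≤ (Real.exp (Δ / θ) - Real.exp ε) * ∫ z, lap θ (y - z.2) ∂π := by
  rw [sub_mul]
  exact sub_le_sub_right (integral_lap_sub_fst_le hθ.le hsupp y) _

/-- Master bound for the Laplace mechanism under a coupling: if `|x - x'| ≤ Δ`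
`π`-a.e., then the difference of the noised densities is bounded by
`(e^{Δ/θ} - e^ε)` times the second noised density. -/
theorem laplace_coupling_master_bound (π : Measure (ℝ × ℝ)) [IsProbabilityMeasure π]
    (Δ ε θ : ℝ) (hε : 0 < ε) (hθ : 0 < θ)
    (hsupp : ∀ᵐ z ∂π, |z.1 - z.2| ≤ Δ) (y : ℝ) :
    (∫ z, lap θ (y - z.1) ∂π) - Real.exp ε * ∫ z, lap θ (y - z.2) ∂π
      ≤ (Real.exp (Δ / θ) - Real.exp ε) * ∫ z, lap θ (y - z.2) ∂π :=
  laplace_coupling_master_bound_general π Δ ε θ hθ hsupp y
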